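/- Let φ, ψ : [0;1] → [0;1]² be continuous paths with φ(0) = (0,0), φ(1) = (1,1), ψ(0) = (0,1) and ψ(1) = (1,0). Then the curves range(φ) and range(ψ) intersect, i.e. there exist s, t ∈ [0;1] with φ(s) = ψ(t). -/

import Mathlib

noncomputable section

abbrev Plane := EuclideanSpace ℝ (Fin 2)

def pt (a b : ℝ) : Plane := !₂[a, b]

def unitSquare : Set Plane := {z | z 0 ∈ Set.Icc (0:ℝ) 1 ∧ z 1 ∈ Set.Icc (0:ℝ) 1}

structure Track where
  k : ℕ
  s : ℕ → ℝ
  x : ℕ → Plane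
  mono : ∀ i < k, s i < s (i + 1)
  ne : ∀ i < k, x i ≠ x (i + 1)

def Track.seg (p : Track) (t : ℝ) : ℕ := sSup {i | i < p.k ∧ p.s i ≤ t}

def Track.path (p : Track) (t : ℝ) : Plane :=
  p.x (p.seg t) + ((t - p.s (p.seg t)) / (p.s (p.seg t + 1) - p.s (p.seg t))) •
    (p.x (p.seg t + 1) - p.x (p.seg t))

def Track.rangeSet (p : Track) : Set Plane := p.path '' Set.Icc (p.s 0) (p.s p.k)

def Track.V (p : Track) : Set Plane := {z | ∃ i ≤ p.k, z = p.x i}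

def line (x y : Plane) : Set Plane := (affineSpan ℝ {x, y} : Set Plane)

def Track.L (p : Track) : Set Plane := {z | ∃ i < p.k, z ∈ line (p.x i) (p.x (i + 1))}

def Track.Lbar (p : Track) : Set Plane :=
  {z | ∃ i ≤ p.k, ∃ j ≤ p.k, p.x i ≠ p.x j ∧ z ∈ line (p.x i) (p.x j)}

def IsSegSet (S : Set Plane) : Prop := ∃ x y : Plane, x ≠ y ∧ S = segment ℝ x y

def NoCommonSegment (p q : Track) : Prop :=
  ¬ ∃ S : Set Plane, IsSegSet S ∧ S ⊆ p.rangeSet ∧ S ⊆ q.rangeSet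

def WSep (p q : Track) : Prop := p.V ∩ q.L = ∅ ∧ q.V ∩ p.L = ∅

def IsInter (p q : Track) (s t : ℝ) : Prop :=
  p.s 0 < s ∧ s < p.s p.k ∧ q.s 0 < t ∧ t < q.s q.k ∧ p.path s = q.path t

def Admissible (p q : Track) (x : Plane) (δ : ℝ) : Prop :=
  0 < δ ∧ ∀ v ∈ p.V ∪ q.V, v ∈ Metric.ball x δ → v = x

def entryParam (p : Track) (s δ : ℝ) (x : Plane) : ℝ :=
  sInf {s' | s' < s ∧ p.path '' Set.Icc s' s ⊆ Metric.ball x δ}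

def exitParam (p : Track) (s δ : ℝ) (x : Plane) : ℝ :=
  sSup {s' | s < s' ∧ p.path '' Set.Icc s s' ⊆ Metric.ball x δ}

def Alternates (x : Plane) (δ : ℝ) (a b c d : Plane) : Prop :=
  c ∈ Metric.sphere x δ \ {a, b} ∧ d ∈ Metric.sphere x δ \ {a, b} ∧
  connectedComponentIn (Metric.sphere x δ \ {a, b}) c ≠
    connectedComponentIn (Metric.sphere x δ \ {a, b}) d

def CrossAt (p q : Track) (s t δ : ℝ) : Prop :=
  Alternates (p.path s) δ
    (p.path (entryParam p s δ (p.path s))) (p.path (exitParam p s δ (p.path s)))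
    (q.path (entryParam q t δ (p.path s))) (q.path (exitParam q t δ (p.path s)))

def IsCrossing (p q : Track) (s t : ℝ) : Prop :=
  IsInter p q s t ∧ ∃ δ : ℝ, Admissible p q (p.path s) δ ∧ CrossAt p q s t δ

def CN (p q : Track) : ℕ := {st : ℝ × ℝ | IsCrossing p q st.1 st.2}.ncard

def par (p q : Track) : ℕ := CN p q % 2

def ds (A B : Set Plane) : ℝ := sInf {r | ∃ a ∈ A, ∃ b ∈ B, r = ‖a - b‖}

def alphaIJ (f g : ℝ → Plane) (aI bI aJ bJ : ℝ) : ℝ :=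
  min (ds {f aI, f bI} (g '' Set.Icc aJ bJ)) (ds {g aJ, g bJ} (f '' Set.Icc aI bI))

def IsModulus2 (f g : ℝ → Plane) (md : ℕ → ℕ) : Prop :=
  Monotone md ∧ ∀ n : ℕ, ∀ t ∈ Set.Icc (-1:ℝ) 2, ∀ t' ∈ Set.Icc (-1:ℝ) 2,
    |t - t'| < (2:ℝ) ^ (-(md n : ℤ)) →
    ‖f t - f t'‖ < (2:ℝ) ^ (-(n : ℤ)) ∧ ‖g t - g t'‖ < (2:ℝ) ^ (-(n : ℤ))

def IsApprox (f : ℝ → Plane) (md : ℕ → ℕ) (a b : ℝ) (n : ℕ) (p : Track) : Prop :=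
  p.s 0 = a ∧ p.s p.k = b ∧
  (∀ i < p.k, p.s (i + 1) - p.s i < (2:ℝ) ^ (-(md n : ℤ))) ∧
  (∀ i ≤ p.k, ‖f (p.s i) - p.x i‖ < (2:ℝ) ^ (-(n : ℤ)))

def ParityIs (f g : ℝ → Plane) (md : ℕ → ℕ) (aI bI aJ bJ : ℝ) (b : ℕ) : Prop :=
  ∀ n : ℕ, (2:ℝ) ^ (-(n : ℤ)) < alphaIJ f g aI bI aJ bJ / 16 →
    ∀ p q : Track, IsApprox f md aI bI n p → IsApprox g md aJ bJ n q → WSep p q →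
      par p q = b

def IsModulus1 (f : ℝ → Plane) (md : ℕ → ℕ) : Prop :=
  Monotone md ∧ ∀ n : ℕ, ∀ t ∈ Set.Icc (-1:ℝ) 2, ∀ t' ∈ Set.Icc (-1:ℝ) 2,
    |t - t'| < (2:ℝ) ^ (-(md n : ℤ)) → ‖f t - f t'‖ < (2:ℝ) ^ (-(n : ℤ))

def nbhdU (A : Set Plane) (δ : ℝ) : Set Plane := {x | ∃ y ∈ A, ‖x - y‖ < δ}

def extF (φ : ℝ → Plane) (t : ℝ) : Plane :=
  if t ≤ 0 then pt t 0 else if t ≤ 1 then φ t else pt t 1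

def extG (ψ : ℝ → Plane) (t : ℝ) : Plane :=
  if t ≤ 0 then pt t 1 else if t ≤ 1 then ψ t else pt t 0

/-! Poincaré–Miranda in the plane: `(s, t) ↦ φ s - ψ t` has first coordinate `≤ 0` on the
side `s = 0` and `≥ 0` on `s = 1`, and second coordinate `≤ 0` on `t = 0` and `≥ 0` on `t = 1`,
so it has a zero. Read as a complex number `F`, a nonvanishing such map has a continuous
logarithm `L` on the square (lift through the covering map `exp`). On each side, `F` times one of
`1, I, -1, -I` has nonnegative real part, so there `L` differs from the principal logarithm of the
rotated `F` by a constant. Consecutive rotations differ by a factor `I`, so at each corner the two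
principal logarithms differ by `π / 2 * I`; around the boundary these add up to `2 * π * I`,
whereas the total change of `L` is `0`. -/

open Complex Set

section ContinuousLog

variable {X : Type*} [TopologicalSpace X]

theorem exists_continuous_exp_eq [SimplyConnectedSpace X] [LocallyPathConnectedSpace X]
    {F : X → ℂ} (hF : Continuous F) (hF₀ : ∀ x, F x ≠ 0) :
    ∃ L : X → ℂ, Continuous L ∧ ∀ x, exp (L x) = F x := by
  obtain ⟨x₀⟩ := PathConnectedSpace.nonempty (X := X)
  obtain ⟨L, -, hL⟩ := (isCoveringMapOn_exp.existsUnique_continuousMap_lifts ⟨F, hF⟩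
    (exp_log (hF₀ x₀)) hF₀).exists
  exact ⟨L, L.continuous, congrFun hL⟩

theorem sub_eq_sub_of_exp_eq_exp [PreconnectedSpace X] {L M : X → ℂ} (hL : Continuous L)
    (hM : Continuous M) (h : ∀ x, exp (L x) = exp (M x)) (a b : X) :
    L b - L a = M b - M a := by
  have := isCoveringMap_exp.const_of_comp (g := fun x ↦ L x - M x) (hL.sub hM)
    (fun x y ↦ Subtype.ext (by simp only [exp_sub, h, div_self (exp_ne_zero _)])) b a
  linear_combination this

theorem sub_eq_log_mul_sub_log_mul [PreconnectedSpace X] {L F : X → ℂ} (hL : Continuous L)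
    (hF : Continuous F) (hLF : ∀ x, exp (L x) = F x) {c : ℂ} (hc : c ≠ 0)
    (hslit : ∀ x, c * F x ∈ slitPlane) (a b : X) :
    L b - L a = log (c * F b) - log (c * F a) := by
  have := sub_eq_sub_of_exp_eq_exp (M := fun x ↦ log (c * F x) - log c) hL
    (((hF.const_mul c).clog hslit).sub continuous_const) (fun x ↦ ?_) a b
  · linear_combination this
  · rw [exp_sub, exp_log (slitPlane_ne_zero (hslit x)), exp_log hc, hLF,
      mul_div_cancel_left₀ _ hc]

end ContinuousLog

theorem Complex.mem_slitPlane_of_nonneg_re {w : ℂ} (hw : w ≠ 0) (hre : 0 ≤ w.re) :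
    w ∈ slitPlane := by
  rw [mem_slitPlane_iff]
  by_contra! h
  exact hw (Complex.ext (le_antisymm h.1 hre) h.2)

theorem Complex.log_I_mul {w : ℂ} (hw : w ≠ 0) (hre : 0 ≤ w.re) :
    log (I * w) = log w + Real.pi / 2 * I := by
  have hsum : arg I + arg w ∈ Ioc (-Real.pi) Real.pi := by
    rw [arg_I]
    constructor <;> linarith [neg_pi_lt_arg w, arg_le_pi_div_two_iff.2 (Or.inl hre), Real.pi_pos]
  have harg : arg (I * w) = arg w + Real.pi / 2 := by
    rw [arg_mul I_ne_zero hw hsum, arg_I, add_comm]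
  apply Complex.ext <;> simp [log_re, log_im, harg]

theorem exists_eq_zero_of_signs_on_lines {F : ℝ × ℝ → ℂ} (hF : Continuous F)
    (hleft : ∀ t, (F (0, t)).re ≤ 0) (hright : ∀ t, 0 ≤ (F (1, t)).re)
    (hbottom : ∀ s, (F (s, 0)).im ≤ 0) (htop : ∀ s, 0 ≤ (F (s, 1)).im) :
    ∃ p, F p = 0 := by
  by_contra! hF₀
  obtain ⟨L, hL, hLF⟩ := exists_continuous_exp_eq hF hF₀
  have side (γ : ℝ → ℝ × ℝ) (hγ : Continuous γ) {c : ℂ} (hc : c ≠ 0)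
      (hre : ∀ s, 0 ≤ (c * F (γ s)).re) (a b : ℝ) :
      L (γ b) - L (γ a) = log (c * F (γ b)) - log (c * F (γ a)) :=
    sub_eq_log_mul_sub_log_mul (hL.comp hγ) (hF.comp hγ) (fun _ ↦ hLF _) hc
      (fun s ↦ mem_slitPlane_of_nonneg_re (mul_ne_zero hc (hF₀ _)) (hre s)) a b
  have corner {w z : ℂ} (h : I * w = z) (hw : w ≠ 0) (hre : 0 ≤ w.re) :
      log z = log w + Real.pi / 2 * I :=
    h ▸ log_I_mul hw hre
  have hI : -I ≠ 0 := neg_ne_zero.2 I_ne_zero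
  have h₁ : (-1 : ℂ) ≠ 0 := by norm_num
  have bottom := side (·, 0) (by fun_prop) I_ne_zero (fun s ↦ by simpa using hbottom s) 0 1
  have right := side (1, ·) (by fun_prop) one_ne_zero (fun t ↦ by simpa using hright t) 0 1
  have top := side (·, 1) (by fun_prop) hI (fun s ↦ by simpa using htop s) 1 0
  have left := side (0, ·) (by fun_prop) h₁ (fun t ↦ by simpa using hleft t) 1 0
  have c₁ := corner (w := 1 * F (1, 0)) (z := I * F (1, 0)) (by ring)
    (mul_ne_zero one_ne_zero (hF₀ _)) (by simpa using hright 0)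
  have c₂ := corner (w := -I * F (1, 1)) (z := 1 * F (1, 1))
    (by linear_combination -F (1, 1) * I_sq) (mul_ne_zero hI (hF₀ _)) (by simpa using htop 1)
  have c₃ := corner (w := -1 * F (0, 1)) (z := -I * F (0, 1)) (by ring)
    (mul_ne_zero h₁ (hF₀ _)) (by simpa using hleft 1)
  have c₄ := corner (w := I * F (0, 0)) (z := -1 * F (0, 0))
    (by linear_combination F (0, 0) * I_sq) (mul_ne_zero I_ne_zero (hF₀ _))
    (by simpa using hbottom 0)
  have : (2 * Real.pi : ℂ) * I = 0 := by
    linear_combination -(bottom + right + top + left) - c₁ - c₂ - c₃ - c₄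
  simp [Real.pi_ne_zero] at this

theorem exists_common_zero_of_signs_on_sides {f g : unitInterval × unitInterval → ℝ}
    (hf : Continuous f) (hg : Continuous g)
    (hf₀ : ∀ t, f (0, t) ≤ 0) (hf₁ : ∀ t, 0 ≤ f (1, t))
    (hg₀ : ∀ s, g (s, 0) ≤ 0) (hg₁ : ∀ s, 0 ≤ g (s, 1)) :
    ∃ p, f p = 0 ∧ g p = 0 := by
  set c : ℝ → unitInterval := projIcc 0 1 zero_le_one
  have hc₀ : c 0 = 0 := projIcc_left _
  have hc₁ : c 1 = 1 := projIcc_right _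
  obtain ⟨p, hp⟩ := exists_eq_zero_of_signs_on_lines
    (F := fun p ↦ f (c p.1, c p.2) + g (c p.1, c p.2) * I) (by fun_prop)
    (fun t ↦ by simpa [hc₀] using hf₀ _) (fun t ↦ by simpa [hc₁] using hf₁ _)
    (fun s ↦ by simpa [hc₀] using hg₀ _) (fun s ↦ by simpa [hc₁] using hg₁ _)
  exact ⟨_, by simpa using congrArg re hp, by simpa using congrArg im hp⟩

theorem intersection_point_exists (φ ψ : ℝ → Plane)
    (hφc : ContinuousOn φ (Set.Icc 0 1)) (hψc : ContinuousOn ψ (Set.Icc 0 1))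
    (hφm : ∀ t ∈ Set.Icc (0:ℝ) 1, φ t ∈ unitSquare)
    (hψm : ∀ t ∈ Set.Icc (0:ℝ) 1, ψ t ∈ unitSquare)
    (hφ0 : φ 0 = pt 0 0) (hφ1 : φ 1 = pt 1 1)
    (hψ0 : ψ 0 = pt 0 1) (hψ1 : ψ 1 = pt 1 0) :
    ∃ s ∈ Set.Icc (0:ℝ) 1, ∃ t ∈ Set.Icc (0:ℝ) 1, φ s = ψ t := by
  have hφ (i : Fin 2) : Continuous fun s : unitInterval ↦ φ s i :=
    (EuclideanSpace.proj i).continuous.comp hφc.domRestrict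
  have hψ (i : Fin 2) : Continuous fun t : unitInterval ↦ ψ t i :=
    (EuclideanSpace.proj i).continuous.comp hψc.domRestrict
  have hdiff (i : Fin 2) :
      Continuous fun p : unitInterval × unitInterval ↦ φ p.1 i - ψ p.2 i :=
    ((hφ i).comp continuous_fst).sub ((hψ i).comp continuous_snd)
  obtain ⟨⟨s, t⟩, h₀, h₁⟩ := exists_common_zero_of_signs_on_sides (hdiff 0) (hdiff 1)
    (fun t ↦ by simpa [hφ0, pt] using (hψm t t.2).1.1)
    (fun t ↦ by simpa [hφ1, pt] using (hψm t t.2).1.2)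
    (fun s ↦ by simpa [hψ0, pt] using (hφm s s.2).2.2)
    (fun s ↦ by simpa [hψ1, pt] using (hφm s s.2).2.1)
  refine ⟨s, s.2, t, t.2, ?_⟩
  ext i
  fin_cases i
  exacts [sub_eq_zero.1 h₀, sub_eq_zero.1 h₁]
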